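/- Let Γ be a connected signed graph, uv a non-pendant edge not on any triangle with σ(uv) = −1, and x a unit eigenvector for the index λ(Γ). Let Γ' = α(Γ, uv). If x_u ≥ 0 and x_v ≥ 0, then λ(Γ') ≥ λ(Γ); if moreover x_u > 0, x_v > 0, and x_u ≠ x_v, then λ(Γ') > λ(Γ). -/

import Mathlib

structure SignedGraph (n : ℕ) where
  sign : Fin n → Fin n → ℝ
  symm : ∀ i j, sign i j = sign j i
  loopless : ∀ i, sign i i = 0
  vals : ∀ i j, sign i j = 0 ∨ sign i j = 1 ∨ sign i j = -1

/-- The adjacency matrix of a signed graph. -/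
def SignedGraph.adj {n : ℕ} (Γ : SignedGraph n) : Matrix (Fin n) (Fin n) ℝ :=
  Matrix.of Γ.sign

/-- The underlying simple graph of a signed graph. -/
def SignedGraph.graph {n : ℕ} (Γ : SignedGraph n) : SimpleGraph (Fin n) where
  Adj i j := Γ.sign i j ≠ 0
  symm := ⟨fun i j h => by show Γ.sign j i ≠ 0; rwa [Γ.symm j i]⟩
  loopless := ⟨fun i h => h (Γ.loopless i)⟩

/-- `lam` is the index (largest eigenvalue) of the signed graph `Γ`. -/
def SignedGraph.IsIndex {n : ℕ} (Γ : SignedGraph n) (lam : ℝ) : Prop :=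
  (∃ y : Fin n → ℝ, y ≠ 0 ∧ Γ.adj.mulVec y = lam • y) ∧
  ∀ μ : ℝ, (∃ y : Fin n → ℝ, y ≠ 0 ∧ Γ.adj.mulVec y = μ • y) → μ ≤ lam

open scoped Matrix

open Matrix in
/-- Rayleigh quotient bound: any unit vector's quadratic form is at most the top eigenvalue. -/
lemma rayleigh_le {n : ℕ} (A : Matrix (Fin n) (Fin n) ℝ) (hA : A.IsHermitian)
    (lam : ℝ) (hmax : ∀ μ : ℝ, (∃ y : Fin n → ℝ, y ≠ 0 ∧ A.mulVec y = μ • y) → μ ≤ lam)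
    (z : Fin n → ℝ) (hz : ∑ i, z i ^ 2 = 1) :
    z ⬝ᵥ A.mulVec z ≤ lam := by
  classical
  set U : Matrix (Fin n) (Fin n) ℝ := (hA.eigenvectorUnitary : Matrix (Fin n) (Fin n) ℝ) with hU
  have htrans : star U = Uᵀ := by
    ext i j; simp [Matrix.star_apply]
  have hUU : U * Uᵀ = 1 := by
    rw [← htrans]; exact (Unitary.mem_iff.mp hA.eigenvectorUnitary.2).2
  set w : Fin n → ℝ := Uᵀ *ᵥ z with hwdef
  have hmu : ∀ i, hA.eigenvalues i ≤ lam := by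
    intro i
    refine hmax _ ⟨_, ?_, hA.mulVec_eigenvectorBasis i⟩
    intro h
    exact hA.eigenvectorBasis.orthonormal.ne_zero i (by ext a; exact congrFun h a)
  have hzz : z ⬝ᵥ z = 1 := by
    rw [← hz]; simp [dotProduct, sq]
  have hw : w ⬝ᵥ w = 1 := by
    have h2 : w ⬝ᵥ w = (z ᵥ* U) ⬝ᵥ (Uᵀ *ᵥ z) := by rw [hwdef, Matrix.mulVec_transpose]
    rw [h2, Matrix.dotProduct_mulVec, Matrix.vecMul_vecMul, hUU, Matrix.vecMul_one, hzz]
  have hform : z ⬝ᵥ A.mulVec z = ∑ i, hA.eigenvalues i * w i ^ 2 := by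
    conv_lhs => rw [hA.spectral_theorem, Unitary.conjStarAlgAut_apply, ← hU]
    rw [htrans]
    rw [← Matrix.mulVec_mulVec, ← Matrix.mulVec_mulVec, Matrix.dotProduct_mulVec,
      ← Matrix.mulVec_transpose]
    show w ⬝ᵥ (Matrix.diagonal (RCLike.ofReal ∘ hA.eigenvalues)).mulVec w = _
    simp only [dotProduct, Matrix.mulVec_diagonal]
    refine Finset.sum_congr rfl fun i _ => ?_
    simp [Function.comp]
    ring
  rw [hform]
  calc ∑ i, hA.eigenvalues i * w i ^ 2 ≤ ∑ i, lam * w i ^ 2 := by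
        refine Finset.sum_le_sum fun i _ => mul_le_mul_of_nonneg_right (hmu i) (sq_nonneg _)
    _ = lam := by
        rw [← Finset.mul_sum]
        have : ∑ i, w i ^ 2 = 1 := by rw [← hw]; simp [dotProduct, sq]
        rw [this, mul_one]

open Matrix in
/-- α-transform on a negative non-pendant edge `uv` lying on no triangle: if
`x_u ≥ 0` and `x_v ≥ 0` then `λ(Γ') ≥ λ(Γ)`; if moreover `x_u > 0`, `x_v > 0` and
`x_u ≠ x_v`, then `λ(Γ') > λ(Γ)`. -/
theorem stmt_5 {n : ℕ} (Γ Γ' : SignedGraph n) (u v : Fin n) (huv : u ≠ v)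
    (hconn : Γ.graph.Connected)
    (hedge : Γ.sign u v = -1)
    (hnonpendu : ∃ w, w ≠ v ∧ Γ.sign u w ≠ 0)
    (hnonpendv : ∃ w, w ≠ u ∧ Γ.sign v w ≠ 0)
    (htri : ∀ w, Γ.sign u w = 0 ∨ Γ.sign v w = 0)
    (hmove : ∀ w, w ≠ u → w ≠ v →
      Γ'.sign u w = Γ.sign u w + Γ.sign v w ∧ Γ'.sign v w = 0)
    (huv' : Γ'.sign u v = Γ.sign u v)
    (hsame : ∀ i j, i ≠ u → i ≠ v → j ≠ u → j ≠ v → Γ'.sign i j = Γ.sign i j)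
    (lam : ℝ) (hlam : Γ.IsIndex lam)
    (x : Fin n → ℝ) (hunit : ∑ i, x i ^ 2 = 1) (heig : Γ.adj.mulVec x = lam • x) :
    ∀ lam' : ℝ, Γ'.IsIndex lam' →
      ((0 ≤ x u ∧ 0 ≤ x v) → lam ≤ lam') ∧
      ((0 < x u ∧ 0 < x v ∧ x u ≠ x v) → lam < lam') := by
  classical
  intro lam' hlam'
  have hA : Γ.adj.IsHermitian := by
    ext i j
    simp [SignedGraph.adj, Matrix.conjTranspose_apply, Γ.symm i j]
  have hA' : Γ'.adj.IsHermitian := by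
    ext i j
    simp [SignedGraph.adj, Matrix.conjTranspose_apply, Γ'.symm i j]
  set e : Fin n → ℝ := fun i => if i = u then 1 else if i = v then -1 else 0 with he
  set r : Fin n → ℝ := fun j => if j = u then 0 else if j = v then 0 else Γ.sign v j with hr
  -- values of e and r
  have eu : e u = 1 := by simp [he]
  have ev : e v = -1 := by simp [he, Ne.symm huv]
  have ej : ∀ j, j ≠ u → j ≠ v → e j = 0 := by intro j h1 h2; simp [he, h1, h2]
  have ru : r u = 0 := by simp [hr]
  have rv : r v = 0 := by simp [hr, Ne.symm huv]
  have rj : ∀ j, j ≠ u → j ≠ v → r j = Γ.sign v j := by intro j h1 h2; simp [hr, h1, h2]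
  -- the matrix identity
  have hE : ∀ i j, Γ'.sign i j = Γ.sign i j + e i * r j + r i * e j := by
    intro i j
    rcases eq_or_ne i u with hiu | hiu
    · subst hiu
      rcases eq_or_ne j i with hju | hju
      · subst hju; rw [Γ'.loopless, Γ.loopless, eu, ru]; ring
      · rcases eq_or_ne j v with hjv | hjv
        · subst hjv; rw [huv', eu, ev, rv, ru]; ring
        · rw [(hmove j hju hjv).1, eu, ru, rj j hju hjv, ej j hju hjv]; ring
    · rcases eq_or_ne i v with hiv | hiv
      · subst hiv
        rcases eq_or_ne j u with hju | hju
        · subst hju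
          rw [Γ'.symm i j, huv', Γ.symm j i, ev, ru, rv, eu]; ring
        · rcases eq_or_ne j i with hjv | hjv
          · subst hjv; rw [Γ'.loopless, Γ.loopless, ev, rv]; ring
          · rw [(hmove j hju hjv).2, ev, rv, rj j hju hjv, ej j hju hjv]; ring
      · rcases eq_or_ne j u with hju | hju
        · subst hju
          rw [Γ'.symm i j, (hmove i hiu hiv).1, eu, ru, rj i hiu hiv, ej i hiu hiv,
            Γ.symm i j]; ring
        · rcases eq_or_ne j v with hjv | hjv
          · subst hjv
            rw [Γ'.symm i j, (hmove i hiu hiv).2, ev, rv, rj i hiu hiv, ej i hiu hiv,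
              Γ.symm i j]; ring
          · rw [hsame i j hiu hiv hju hjv, ej i hiu hiv, ej j hju hjv]; ring
  -- basic sums
  have sum_e : ∀ z : Fin n → ℝ, ∑ i, z i * e i = z u - z v := by
    intro z
    have h1 : ∀ i, z i * e i = (if i = u then z i else 0) + (if i = v then -z i else 0) := by
      intro i
      by_cases hiu : i = u
      · subst hiu; rw [eu]; simp [huv]
      · by_cases hiv : i = v
        · subst hiv; rw [ev, if_neg (Ne.symm huv)]; norm_num
        · rw [ej i hiu hiv]; simp [hiu, hiv]
    simp only [h1, Finset.sum_add_distrib, Finset.sum_ite_eq', Finset.mem_univ, if_true]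
    ring
  have sum_er : ∑ i, e i * r i = 0 := by
    refine Finset.sum_eq_zero fun i _ => ?_
    by_cases hiu : i = u
    · subst hiu; rw [ru]; ring
    · by_cases hiv : i = v
      · subst hiv; rw [rv]; ring
      · rw [ej i hiu hiv]; ring
  have sum_ee : ∑ i, e i * e i = 2 := by
    have h1 : ∀ i, e i * e i = (if i = u then 1 else 0) + (if i = v then 1 else 0) := by
      intro i
      by_cases hiu : i = u
      · subst hiu; rw [eu]; simp [huv]
      · by_cases hiv : i = v
        · subst hiv; rw [ev]; simp [Ne.symm huv]
        · rw [ej i hiu hiv]; simp [hiu, hiv]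
    simp only [h1, Finset.sum_add_distrib, Finset.sum_ite_eq', Finset.mem_univ, if_true]
    norm_num
  -- quadratic form expansion helper
  have hQ2 : ∀ (s : Fin n → Fin n → ℝ) (z w : Fin n → ℝ),
      z ⬝ᵥ (Matrix.of s).mulVec w = ∑ i, ∑ j, z i * (s i j * w j) := by
    intro s z w
    simp [dotProduct, Matrix.mulVec, Finset.mul_sum]
  -- key quadratic form identity
  have quad : ∀ z : Fin n → ℝ,
      z ⬝ᵥ Γ'.adj.mulVec z
        = z ⬝ᵥ Γ.adj.mulVec z + 2 * ((∑ i, z i * e i) * (∑ j, r j * z j)) := by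
    intro z
    have prod1 : (∑ i, z i * e i) * (∑ j, r j * z j)
        = ∑ i, ∑ j, (z i * e i) * (r j * z j) := Finset.sum_mul_sum _ _ _ _
    have prod2 : (∑ i, z i * e i) * (∑ j, r j * z j)
        = ∑ i, ∑ j, (z i * r i) * (e j * z j) := by
      rw [prod1, Finset.sum_comm]
      exact Finset.sum_congr rfl fun j _ => Finset.sum_congr rfl fun i _ => by ring
    have lhs : z ⬝ᵥ Γ'.adj.mulVec z = ∑ i, ∑ j, z i * (Γ'.sign i j * z j) := hQ2 _ _ _
    have rhs : z ⬝ᵥ Γ.adj.mulVec z = ∑ i, ∑ j, z i * (Γ.sign i j * z j) := hQ2 _ _ _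
    rw [lhs, rhs]
    have expand : ∀ i j, z i * (Γ'.sign i j * z j)
        = z i * (Γ.sign i j * z j) + (z i * e i) * (r j * z j) + (z i * r i) * (e j * z j) := by
      intro i j; rw [hE i j]; ring
    calc ∑ i, ∑ j, z i * (Γ'.sign i j * z j)
        = ∑ i, ∑ j, (z i * (Γ.sign i j * z j)
            + (z i * e i) * (r j * z j) + (z i * r i) * (e j * z j)) :=
          Finset.sum_congr rfl fun i _ => Finset.sum_congr rfl fun j _ => expand i j
      _ = (∑ i, ∑ j, z i * (Γ.sign i j * z j)) + (∑ i, ∑ j, (z i * e i) * (r j * z j))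
            + (∑ i, ∑ j, (z i * r i) * (e j * z j)) := by
          simp [Finset.sum_add_distrib]
      _ = (∑ i, ∑ j, z i * (Γ.sign i j * z j))
            + 2 * ((∑ i, z i * e i) * (∑ j, r j * z j)) := by
          rw [← prod1, ← prod2]; ring
  -- eigen facts
  have hAx : ∀ i, (Γ.adj.mulVec x) i = lam * x i := by
    intro i; rw [heig]; simp
  have hS : ∑ j, r j * x j = lam * x v + x u := by
    have h1 : (Γ.adj.mulVec x) v = ∑ j, Γ.sign v j * x j := by
      simp [Matrix.mulVec, dotProduct, SignedGraph.adj]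
    have h2 : ∀ j, Γ.sign v j * x j
        = r j * x j + (if j = u then Γ.sign v u * x u else 0)
          + (if j = v then Γ.sign v v * x v else 0) := by
      intro j
      by_cases hju : j = u
      · subst hju; rw [ru]; simp [huv]
      · by_cases hjv : j = v
        · subst hjv; rw [rv]; simp [hju]
        · rw [rj j hju hjv]; simp [hju, hjv]
    have h3 : ∑ j, Γ.sign v j * x j
        = (∑ j, r j * x j) + Γ.sign v u * x u + Γ.sign v v * x v := by
      rw [Finset.sum_congr rfl fun j _ => h2 j, Finset.sum_add_distrib, Finset.sum_add_distrib,
        Finset.sum_ite_eq' Finset.univ u fun _ => Γ.sign v u * x u,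
        Finset.sum_ite_eq' Finset.univ v fun _ => Γ.sign v v * x v]
      simp
    have hvu : Γ.sign v u = -1 := by rw [Γ.symm v u, hedge]
    have h4 := hAx v
    rw [h1, h3, hvu, Γ.loopless] at h4
    linarith
  have hQx : x ⬝ᵥ Γ.adj.mulVec x = lam := by
    have h1 : x ⬝ᵥ Γ.adj.mulVec x = ∑ i, x i * (lam * x i) := by
      simp [dotProduct, hAx]
    rw [h1]
    have h2 : ∀ i, x i * (lam * x i) = lam * x i ^ 2 := fun i => by ring
    simp only [h2, ← Finset.mul_sum, hunit, mul_one]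
  have heAx : ∑ i, e i * (Γ.adj.mulVec x) i = lam * (x u - x v) := by
    have h1 : ∀ i, e i * (Γ.adj.mulVec x) i = lam * (x i * e i) := by
      intro i; rw [hAx i]; ring
    simp only [h1, ← Finset.mul_sum, sum_e x]
  -- symmetry of the quadratic form of Γ
  have hsymmQ : ∀ z w : Fin n → ℝ, z ⬝ᵥ Γ.adj.mulVec w = w ⬝ᵥ Γ.adj.mulVec z := by
    intro z w
    have l1 : z ⬝ᵥ Γ.adj.mulVec w = ∑ i, ∑ j, z i * (Γ.sign i j * w j) := hQ2 _ _ _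
    have l2 : w ⬝ᵥ Γ.adj.mulVec z = ∑ i, ∑ j, w i * (Γ.sign i j * z j) := hQ2 _ _ _
    rw [l1, l2, Finset.sum_comm]
    exact Finset.sum_congr rfl fun j _ => Finset.sum_congr rfl fun i _ => by
      rw [Γ.symm i j]; ring
  have heAe : e ⬝ᵥ Γ.adj.mulVec e = 2 := by
    have h1 : ∀ i, (Γ.adj.mulVec e) i = Γ.sign i u - Γ.sign i v := by
      intro i
      have : (Γ.adj.mulVec e) i = ∑ j, Γ.sign i j * e j := by
        simp [Matrix.mulVec, dotProduct, SignedGraph.adj]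
      rw [this, sum_e (fun j => Γ.sign i j)]
    have h2 : e ⬝ᵥ Γ.adj.mulVec e = ∑ i, (Γ.sign i u - Γ.sign i v) * e i := by
      simp only [dotProduct, h1]
      exact Finset.sum_congr rfl fun i _ => by ring
    rw [h2, sum_e (fun i => Γ.sign i u - Γ.sign i v)]
    rw [Γ.loopless, Γ.loopless, Γ.symm v u, hedge]
    norm_num
  -- λ ≥ 0 via the standard basis vector at u
  have hlam0 : 0 ≤ lam := by
    have hz1 : ∑ i, (Pi.single u 1 : Fin n → ℝ) i ^ 2 = 1 := by
      have h1 : ∀ i, (Pi.single u 1 : Fin n → ℝ) i ^ 2 = if i = u then 1 else 0 := by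
        intro i; by_cases h : i = u <;> simp [Pi.single_apply, h]
      simp only [h1, Finset.sum_ite_eq', Finset.mem_univ, if_true]
    have hval : (Pi.single u 1 : Fin n → ℝ) ⬝ᵥ Γ.adj.mulVec (Pi.single u 1) = 0 := by
      have l1 : (Pi.single u 1 : Fin n → ℝ) ⬝ᵥ Γ.adj.mulVec (Pi.single u 1)
          = ∑ i, ∑ j, (Pi.single u 1 : Fin n → ℝ) i * (Γ.sign i j * (Pi.single u 1 : Fin n → ℝ) j) :=
        hQ2 _ _ _
      rw [l1]
      refine Finset.sum_eq_zero fun i _ => Finset.sum_eq_zero fun j _ => ?_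
      by_cases hiu : i = u
      · by_cases hju : j = u
        · subst hiu; subst hju; simp [Γ.loopless]
        · simp [Pi.single_apply, hju]
      · simp [Pi.single_apply, hiu]
    have := rayleigh_le Γ.adj hA lam hlam.2 (Pi.single u 1) hz1
    rw [hval] at this
    linarith
  -- first inequality: Rayleigh at x
  have ineq1 : lam + 2 * ((x u - x v) * (lam * x v + x u)) ≤ lam' := by
    have h1 := rayleigh_le Γ'.adj hA' lam' hlam'.2 x hunit
    rw [quad x, hQx, sum_e x, hS] at h1
    exact h1
  -- second inequality: Rayleigh at the swapped vector y = x + c • e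
  set c : ℝ := x v - x u with hc
  set y : Fin n → ℝ := fun i => x i + c * e i with hy
  have sum_ye : ∑ i, y i * e i = c := by
    have h1 : ∀ i, y i * e i = x i * e i + c * (e i * e i) := by
      intro i; simp only [hy]; ring
    simp only [h1, Finset.sum_add_distrib, ← Finset.mul_sum, sum_e x, sum_ee]
    ring
  have sum_ry : ∑ j, r j * y j = lam * x v + x u := by
    have h1 : ∀ j, r j * y j = r j * x j + c * (e j * r j) := by
      intro j; simp only [hy]; ring
    simp only [h1, Finset.sum_add_distrib, ← Finset.mul_sum, sum_er, hS]
    ring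
  have hunit_y : ∑ i, y i ^ 2 = 1 := by
    have h1 : ∀ i, y i ^ 2 = x i ^ 2 + 2 * c * (x i * e i) + c ^ 2 * (e i * e i) := by
      intro i; simp only [hy]; ring
    simp only [h1, Finset.sum_add_distrib, ← Finset.mul_sum, hunit, sum_e x, sum_ee]
    simp only [hc]; ring
  have hQy : y ⬝ᵥ Γ.adj.mulVec y = lam + 2 * c * (lam * (x u - x v)) + c ^ 2 * 2 := by
    have hyv : y = x + c • e := by
      funext i; simp [hy]
    have hxAe : x ⬝ᵥ Γ.adj.mulVec e = lam * (x u - x v) := by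
      rw [hsymmQ x e]
      simpa [dotProduct] using heAx
    have heAx' : e ⬝ᵥ Γ.adj.mulVec x = lam * (x u - x v) := by
      simpa [dotProduct] using heAx
    rw [hyv, Matrix.mulVec_add, Matrix.mulVec_smul]
    simp only [dotProduct_add, add_dotProduct, dotProduct_smul,
      smul_dotProduct, smul_eq_mul]
    rw [hQx, hxAe, heAx', heAe]
    ring
  have ineq2 : lam + 2 * c * (lam * (x u - x v)) + c ^ 2 * 2
      + 2 * (c * (lam * x v + x u)) ≤ lam' := by
    have h1 := rayleigh_le Γ'.adj hA' lam' hlam'.2 y hunit_y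
    rw [quad y, hQy, sum_ye, sum_ry] at h1
    linarith
  simp only [hc] at ineq2
  constructor
  · rintro ⟨h1, h2⟩
    rcases le_total (x v) (x u) with h | h
    · linarith [mul_nonneg (sub_nonneg.mpr h) (add_nonneg (mul_nonneg hlam0 h2) h1), ineq1]
    · linarith [mul_nonneg (sub_nonneg.mpr h) (add_nonneg (mul_nonneg hlam0 h1) h2), ineq2]
  · rintro ⟨h1, h2, h3⟩
    rcases lt_or_gt_of_ne h3 with h | h
    · linarith [mul_pos (sub_pos.mpr h) (add_pos_of_nonneg_of_pos (mul_nonneg hlam0 h1.le) h2),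
        ineq2]
    · linarith [mul_pos (sub_pos.mpr h) (add_pos_of_nonneg_of_pos (mul_nonneg hlam0 h2.le) h1),
        ineq1]
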